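/- If W is a palindrome of length at least 2 and W is rich, then the longest proper palindromic suffix U of W is the longest repeated suffix of W, so that K_W = |U| + 1. -/

import Mathlib

open List

variable {α : Type*} [DecidableEq α]

/-- The set of factors (contiguous subwords) of `W`. -/
def factorFinset (W : List α) : Finset (List α) := (W.inits.flatMap List.tails).toFinset

/-- A palindrome is a word equal to its reversal. -/
def Pal (u : List α) : Prop := u.reverse = u

instance : DecidablePred (Pal : List α → Prop) :=
  fun u => inferInstanceAs (Decidable (u.reverse = u))

/-- The set of palindromic factors of `W` (including the empty word). -/
def palFactorFinset (W : List α) : Finset (List α) := (factorFinset W).filter Pal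

/-- Subword complexity: the number of distinct factors of `W` of length `n`. -/
def C (W : List α) (n : ℕ) : ℕ := ((factorFinset W).filter (fun u => u.length = n)).card

/-- Palindromic complexity: number of distinct palindromic factors of `W` of length `n`. -/
def P (W : List α) (n : ℕ) : ℕ := ((palFactorFinset W).filter (fun u => u.length = n)).card

/-- A word is rich if it has exactly `|W| + 1` distinct palindromic factors. -/
def Rich (W : List α) : Prop := (palFactorFinset W).card = W.length + 1

/-- Number of occurrences of `u` as a factor of `W`. -/
def occ (u W : List α) : ℕ := ((List.range (W.length + 1)).filter (fun i => u <+: W.drop i)).length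

/-- `Z` is a complete return to `u` in `W`: a factor of `W` with exactly two
occurrences of `u`, one as a prefix and one as a suffix. -/
def CompleteReturn (u Z W : List α) : Prop := Z <:+: W ∧ u <+: Z ∧ u <:+ Z ∧ occ u Z = 2

/-- `u` is a right special factor of `W`. -/
def RightSpecial (u W : List α) : Prop :=
  ∃ x y : α, x ≠ y ∧ (u ++ [x]) <:+: W ∧ (u ++ [y]) <:+: W

/-- `R_W`: the smallest `p` such that `W` has no right special factor of length `p`. -/
noncomputable def RW (W : List α) : ℕ := sInf {p : ℕ | ∀ u : List α, u.length = p → ¬ RightSpecial u W}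

/-- `K_W`: the length of the shortest suffix of `W` occurring exactly once in `W`. -/
noncomputable def KW (W : List α) : ℕ := sInf {k : ℕ | ∃ u : List α, u <:+ W ∧ u.length = k ∧ occ u W = 1}

/-- A word is trapezoidal if `|W| = R_W + K_W`. -/
def Trapezoidal (W : List α) : Prop := W.length = RW W + KW W

/-- The minimal period of `W`. -/
noncomputable def minPeriod (W : List α) : ℕ :=
  sInf {q : ℕ | 0 < q ∧ ∀ i : ℕ, i + q < W.length → W[i]? = W[i + q]?}

/-- A binary word is balanced if the number of occurrences of a letter in two
factors of equal length differ by at most 1. -/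
def BalancedWord (W : List Bool) : Prop :=
  ∀ u v : List Bool, u <:+: W → v <:+: W → u.length = v.length →
    u.count true ≤ v.count true + 1


/-!
Every prefix `P` of a rich word has a palindromic suffix that does not occur in `P.dropLast`. Applied
to a complete return `V` to a palindrome `U` (a factor with `U` as prefix, `U` as suffix and no other
occurrence of `U`), that new palindrome must be `V` itself, so complete returns to palindromes are
palindromes. Now let `U` be the longest proper palindromic suffix of the rich palindrome `W`; it is
also a prefix of `W`. If `U` occurred strictly inside `W`, the prefix of `W` ending at its first such
occurrence would be a complete return to `U`, hence a palindromic prefix (so suffix) of `W` longer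
than `U`. So the only occurrences of `U` are as a prefix and as a suffix: every suffix longer than
`U` is unioccurrent, while every suffix of `U` also ends at position `|U|`, so it occurs twice.
-/

omit [DecidableEq α] in
theorem List.IsInfix.isSuffix_of_not_infix_dropLast {q V : List α} (h : q <:+: V)
    (hnew : ¬ q <:+: V.dropLast) : q <:+ V := by
  obtain ⟨s, t, rfl⟩ := h
  cases t with
  | nil => exact ⟨s, by simp⟩
  | cons a t =>
    refine absurd ?_ hnew
    rw [dropLast_append_of_ne_nil (cons_ne_nil a t)]
    exact ⟨s, (a :: t).dropLast, rfl⟩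

omit [DecidableEq α] in
theorem List.IsPrefix.prefix_dropLast {u V : List α} (h : u <+: V) (hlt : u.length < V.length) :
    u <+: V.dropLast :=
  prefix_of_prefix_length_le h (dropLast_prefix V) (by rw [length_dropLast]; omega)

omit [DecidableEq α] in
theorem Pal.prefix_of_suffix {q Q : List α} (hq : Pal q) (hQ : Pal Q) (h : q <:+ Q) : q <+: Q := by
  have := reverse_prefix.mpr h
  rwa [hq, hQ] at this

omit [DecidableEq α] in
theorem Pal.suffix_of_prefix {q Q : List α} (hq : Pal q) (hQ : Pal Q) (h : q <+: Q) : q <:+ Q := by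
  have := reverse_suffix.mpr h
  rwa [hq, hQ] at this

omit [DecidableEq α] in
theorem Pal.infix_dropLast_of_suffix {q Q V : List α} (hq : Pal q) (hQ : Pal Q) (hqQ : q <:+ Q)
    (hQV : Q <:+ V) (hlt : q.length < Q.length) : q <:+: V.dropLast := by
  obtain ⟨t, rfl⟩ := hq.prefix_of_suffix hQ hqQ
  obtain ⟨s, rfl⟩ := hQV
  have ht : t ≠ [] := by rintro rfl; simp at hlt
  rw [← append_assoc, dropLast_append_of_ne_nil ht]
  exact ⟨s, t.dropLast, rfl⟩

theorem mem_factorFinset {u W : List α} : u ∈ factorFinset W ↔ u <:+: W := by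
  simp only [factorFinset, mem_toFinset, mem_flatMap, mem_inits, mem_tails]
  constructor
  · rintro ⟨t, htW, hut⟩
    exact hut.isInfix.trans htW.isInfix
  · rintro ⟨s, t, rfl⟩
    exact ⟨s ++ u, ⟨t, by simp⟩, suffix_append s u⟩

theorem mem_palFactorFinset {u W : List α} : u ∈ palFactorFinset W ↔ u <:+: W ∧ Pal u := by
  simp only [palFactorFinset, Finset.mem_filter, mem_factorFinset]

/-- Two palindromic factors of `V` missing from `V.dropLast` are both suffixes of `V`, and the
shorter one would reappear as a prefix of the longer one. -/
theorem card_sdiff_palFactorFinset_dropLast_le_one (V : List α) :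
    (palFactorFinset V \ palFactorFinset V.dropLast).card ≤ 1 := by
  have eq_of_length_le : ∀ a b, a ∈ palFactorFinset V \ palFactorFinset V.dropLast →
      b ∈ palFactorFinset V \ palFactorFinset V.dropLast → a.length ≤ b.length → a = b := by
    simp only [Finset.mem_sdiff, mem_palFactorFinset, not_and]
    rintro a b ⟨⟨ha, haPal⟩, haNew⟩ ⟨⟨hb, hbPal⟩, hbNew⟩ hab
    have haNew : ¬ a <:+: V.dropLast := fun h => haNew h haPal
    have hbV := hb.isSuffix_of_not_infix_dropLast fun h => hbNew h hbPal
    have hab' : a <:+ b := suffix_of_suffix_length_le (ha.isSuffix_of_not_infix_dropLast haNew) hbV hab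
    rcases hab.eq_or_lt with heq | hlt
    · exact hab'.eq_of_length heq
    · exact absurd (haPal.infix_dropLast_of_suffix hbPal hab' hbV hlt) haNew
  refine Finset.card_le_one.mpr fun a ha b hb => ?_
  rcases le_total a.length b.length with h | h
  · exact eq_of_length_le a b ha hb h
  · exact (eq_of_length_le b a hb ha h).symm

theorem card_palFactorFinset_le_dropLast (V : List α) :
    (palFactorFinset V).card ≤ (palFactorFinset V.dropLast).card + 1 :=
  (Finset.card_le_card_sdiff_add_card (t := palFactorFinset V.dropLast)).trans <| by
    have := card_sdiff_palFactorFinset_dropLast_le_one V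
    omega

theorem card_palFactorFinset_le (V : List α) : (palFactorFinset V).card ≤ V.length + 1 := by
  induction V using reverseRecOn with
  | nil =>
    refine Finset.card_le_one.mpr fun a ha b hb => ?_
    rw [mem_palFactorFinset, infix_nil] at ha hb
    rw [ha.1, hb.1]
  | append_singleton l a ih =>
    have := card_palFactorFinset_le_dropLast (l ++ [a])
    rw [dropLast_concat] at this
    simp only [length_append, length_singleton]
    omega

theorem Rich.dropLast {V : List α} (hV : Rich V) : Rich V.dropLast := by
  have h₁ := card_palFactorFinset_le_dropLast V
  have h₂ := card_palFactorFinset_le V.dropLast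
  unfold Rich at *
  rw [length_dropLast] at *
  rcases V with _ | ⟨a, V⟩
  · rfl
  · simp only [length_cons] at *
    omega

theorem Rich.of_prefix {W P : List α} (hW : Rich W) (hP : P <+: W) : Rich P := by
  induction W using reverseRecOn with
  | nil => rwa [prefix_nil.mp hP]
  | append_singleton l a ih =>
    rcases prefix_concat_iff.mp hP with rfl | hPl
    · exact hW
    · exact ih (by simpa using hW.dropLast) hPl

theorem Rich.exists_pal_suffix_not_infix_dropLast {V : List α} (hV : Rich V) (hne : V ≠ []) :
    ∃ q, q <:+ V ∧ Pal q ∧ ¬ q <:+: V.dropLast := by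
  have hlt : (palFactorFinset V.dropLast).card < (palFactorFinset V).card := by
    have := card_palFactorFinset_le V.dropLast
    have := length_pos_iff.mpr hne
    rw [length_dropLast] at *
    unfold Rich at hV
    omega
  obtain ⟨q, hq, hqNew⟩ := Finset.exists_mem_notMem_of_card_lt_card hlt
  rw [mem_palFactorFinset] at hq
  have hqNew : ¬ q <:+: V.dropLast := fun h => hqNew (mem_palFactorFinset.mpr ⟨h, hq.2⟩)
  exact ⟨q, hq.1.isSuffix_of_not_infix_dropLast hqNew, hq.2, hqNew⟩

theorem Rich.pal_of_prefix_of_suffix {V U : List α} (hV : Rich V) (hU : Pal U) (hpre : U <+: V)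
    (hsuf : U <:+ V) (hocc : ∀ i, 0 < i → i + U.length < V.length → ¬ U <+: V.drop i) :
    Pal V := by
  rcases eq_or_ne V [] with rfl | hne
  · rfl
  obtain ⟨q, hqV, hq, hqNew⟩ := hV.exists_pal_suffix_not_infix_dropLast hne
  have hUq : U.length ≤ q.length := by
    by_contra! hlt
    exact hqNew (hq.infix_dropLast_of_suffix hU (suffix_of_suffix_length_le hqV hsuf hlt.le) hsuf hlt)
  have hUq' : U <+: q := hU.prefix_of_suffix hq (suffix_of_suffix_length_le hsuf hqV hUq)
  obtain ⟨s, rfl⟩ := hqV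
  rcases eq_or_ne s [] with rfl | hs
  · exact hq
  have hslen := length_pos_iff.mpr hs
  have hqU : q.length ≤ U.length := by
    by_contra! hlt
    refine hocc s.length hslen (by simp; omega) ?_
    rwa [drop_left]
  obtain rfl : U = q := hUq'.eq_of_length (le_antisymm hUq hqU)
  exact absurd (hpre.prefix_dropLast (by simp; omega)).isInfix hqNew

theorem Rich.add_length_le_of_prefix_drop {W U : List α} (hW : Rich W) (hU : Pal U)
    (hUW : U <+: W) (hmax : ∀ P, P <+: W → P ≠ W → Pal P → P.length ≤ U.length) :
    ∀ j, 0 < j → U <+: W.drop j → W.length ≤ j + U.length := by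
  intro j
  induction j using Nat.strong_induction_on with
  | _ j ih =>
  intro hj hjU
  by_contra! hlt
  have hV : W.take (j + U.length) <+: W := take_prefix _ _
  have hVlen : (W.take (j + U.length)).length = j + U.length := by simp; omega
  have hVpal : Pal (W.take (j + U.length)) := by
    refine (hW.of_prefix hV).pal_of_prefix_of_suffix hU (prefix_take_iff.mpr ⟨hUW, by omega⟩) ?_ ?_
    · rw [take_add, ← prefix_iff_eq_take.mp hjU]
      exact suffix_append _ _
    · intro i hi hij hiU
      rw [drop_take, prefix_take_iff] at hiU
      have := ih i (by omega) hi hiU.1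
      omega
  have := hmax _ hV (fun h => by rw [h] at hVlen; omega) hVpal
  omega

theorem occ_eq_card (u W : List α) :
    occ u W = ((Finset.range (W.length + 1)).filter fun i => u <+: W.drop i).card := rfl

theorem one_le_occ {u W : List α} {i : ℕ} (hi : i ≤ W.length) (hu : u <+: W.drop i) :
    1 ≤ occ u W := by
  rw [occ_eq_card]
  exact Finset.card_pos.mpr ⟨i, by simp [hu]; omega⟩

theorem two_le_occ {u W : List α} {i j : ℕ} (hij : i ≠ j) (hi : i ≤ W.length)
    (hui : u <+: W.drop i) (hj : j ≤ W.length) (huj : u <+: W.drop j) : 2 ≤ occ u W := by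
  rw [occ_eq_card]
  exact Finset.one_lt_card.mpr ⟨i, by simp [hui]; omega, j, by simp [huj]; omega, hij⟩

theorem occ_le_one {u W : List α} {c : ℕ} (h : ∀ i ≤ W.length, u <+: W.drop i → i = c) :
    occ u W ≤ 1 := by
  rw [occ_eq_card]
  refine Finset.card_le_one.mpr fun i hi j hj => ?_
  simp only [Finset.mem_filter, Finset.mem_range] at hi hj
  rw [h i (by omega) hi.2, h j (by omega) hj.2]

theorem two_le_occ_of_suffix_of_prefix {v U W : List α} (hvU : v <:+ U) (hvW : v <:+ W)
    (hUW : U <+: W) (hlt : U.length < W.length) : 2 ≤ occ v W := by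
  obtain ⟨t, rfl⟩ := hvU
  rw [length_append] at hlt
  have hvt : v <+: W.drop t.length := by
    obtain ⟨r, rfl⟩ := hUW
    simp
  refine two_le_occ (j := W.length - v.length) (by omega) (by omega) hvt (Nat.sub_le _ _) ?_
  rw [← suffix_iff_eq_drop.mp hvW]

theorem occ_le_one_of_suffix {U u W : List α}
    (hU : ∀ j, 0 < j → U <+: W.drop j → W.length ≤ j + U.length) (huW : u <:+ W) (hUu : U <:+ u)
    (hlt : U.length < u.length) : occ u W ≤ 1 := by
  obtain ⟨t, rfl⟩ := hUu
  rw [length_append] at hlt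
  refine occ_le_one (c := W.length - (t ++ U).length) fun i hi hiu => ?_
  have hUi : U <+: W.drop (i + t.length) := by
    obtain ⟨r, hr⟩ := hiu
    rw [← drop_drop, ← hr]
    simp
  have := hU (i + t.length) (by omega) hUi
  have := hiu.length_le
  simp only [length_append, length_drop] at *
  omega

theorem KW_eq {W : List α} {K : ℕ} (hK : ∃ u, u <:+ W ∧ u.length = K ∧ occ u W = 1)
    (hlt : ∀ u, u <:+ W → u.length < K → occ u W ≠ 1) : KW W = K := by
  refine le_antisymm (Nat.sInf_le hK) (le_csInf ⟨K, hK⟩ ?_)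
  rintro k ⟨u, hu, rfl, hocc⟩
  by_contra! hk
  exact hlt u hu hk hocc

theorem stmt17_general {α : Type*} [DecidableEq α] (W U : List α)
    (hpal : Pal W) (hrich : Rich W)
    (hUsuf : U <:+ W) (hUne : U ≠ W) (hUpal : Pal U)
    (hmax : ∀ u : List α, u <:+ W → u ≠ W → Pal u → u.length ≤ U.length) :
    (2 ≤ occ U W ∧ ∀ u : List α, u <:+ W → 2 ≤ occ u W → u.length ≤ U.length) ∧
      KW W = U.length + 1 := by
  have hUpre : U <+: W := hUpal.prefix_of_suffix hpal hUsuf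
  have hUlt : U.length < W.length :=
    lt_of_le_of_ne hUsuf.length_le fun h => hUne (hUsuf.eq_of_length h)
  have hUocc := hrich.add_length_le_of_prefix_drop hUpal hUpre
    fun P hP hPW hPpal => hmax P (hPpal.suffix_of_prefix hpal hP) hPW hPpal
  have hunique : ∀ u, u <:+ W → U.length < u.length → occ u W ≤ 1 := fun u hu hlt =>
    occ_le_one_of_suffix hUocc hu (suffix_of_suffix_length_le hUsuf hu hlt.le) hlt
  refine ⟨⟨two_le_occ_of_suffix_of_prefix suffix_rfl hUsuf hUpre hUlt, fun u hu h2 => ?_⟩,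
    KW_eq ⟨W.drop (W.length - (U.length + 1)), drop_suffix _ _, by simp; omega, ?_⟩ ?_⟩
  · by_contra! hlt
    have := hunique u hu hlt
    omega
  · have := hunique (W.drop (W.length - (U.length + 1))) (drop_suffix _ _) (by simp; omega)
    have := one_le_occ (u := W.drop (W.length - (U.length + 1))) (Nat.sub_le _ _) prefix_rfl
    omega
  · intro u hu hlt
    have huU : u <:+ U := suffix_of_suffix_length_le hu hUsuf (by omega)
    have := two_le_occ_of_suffix_of_prefix huU hu hUpre hUlt
    omega

theorem stmt17 {α : Type*} [DecidableEq α] (W U : List α) (h2 : 2 ≤ W.length)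
    (hpal : Pal W) (hrich : Rich W)
    (hUsuf : U <:+ W) (hUne : U ≠ W) (hUpal : Pal U)
    (hmax : ∀ u : List α, u <:+ W → u ≠ W → Pal u → u.length ≤ U.length) :
    (2 ≤ occ U W ∧ ∀ u : List α, u <:+ W → 2 ≤ occ u W → u.length ≤ U.length) ∧
      KW W = U.length + 1 :=
  stmt17_general W U hpal hrich hUsuf hUne hUpal hmax
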